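/- arXiv:2403.16448 — 4 statements merged into one kernel-verified Lean document; each statement's English description precedes it below -/
import Mathlib

section
/- The r-Stirling number of the first kind satisfies S1_r(n,k) = Σ_{j=k}^n C(n,j) · S1(j,k) · r^{(n−j)↑}, where r^{m↑} denotes the rising factorial. -/
open Polynomial Finset

/-- The unsigned Stirling number of the first kind. -/
def stirling1 : ℕ → ℕ → ℕ
  | 0, 0 => 1
  | 0, _ + 1 => 0
  | _ + 1, 0 => 0
  | n + 1, k + 1 => n * stirling1 n (k + 1) + stirling1 n k

/-- The `r`-Stirling number of the first kind, defined via the expansion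
`(x+r)^{n↑} = Σ_k S1r r n k * x^k`, equivalently `(1/k!)` times the `k`-th
derivative in `r` of the rising factorial `r^{n↑}`. -/
noncomputable def S1r (r : ℝ) (n k : ℕ) : ℝ :=
  (1 / (k.factorial : ℝ)) * deriv^[k] (fun x : ℝ => (ascPochhammer ℝ n).eval x) r

/-!
By Taylor's formula at `r`, `S1r r n k` is the `k`-th coefficient of the polynomial
`x ↦ (x + r)^{n↑}`. The rising factorial satisfies the Vandermonde identity
`(x + y)^{n↑} = ∑_{i + j = n} C(n, i) x^{i↑} y^{j↑}` (induct on `n`, splitting the new factor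
`x + y + n` as `(x + i) + (y + j)`), and the `k`-th coefficient of `x^{i↑}` is `S1(i, k)`, which
vanishes for `i < k`.
-/

theorem stirling1_eq_stirlingFirst : stirling1 = Nat.stirlingFirst := by
  funext n k
  induction n generalizing k with
  | zero => cases k <;> rfl
  | succ n ih => cases k <;> simp [stirling1, Nat.stirlingFirst_succ_succ, ih]

namespace Polynomial

theorem ascPochhammer_coeff (R : Type*) [Semiring R] :
    ∀ n k : ℕ, (ascPochhammer R n).coeff k = Nat.stirlingFirst n k
  | n, 0 => by
    rw [coeff_zero_eq_eval_zero, ascPochhammer_eval_zero]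
    cases n <;> simp
  | 0, k + 1 => by simp [coeff_one]
  | n + 1, k + 1 => by
    rw [ascPochhammer_succ_right, mul_add, coeff_add, coeff_mul_X, ← C_eq_natCast, coeff_mul_C,
      ascPochhammer_coeff R n k, ascPochhammer_coeff R n (k + 1), Nat.stirlingFirst_succ_succ,
      Nat.cast_add, Nat.cast_mul, Nat.cast_comm, add_comm]

theorem ascPochhammer_eval_add {R : Type*} [CommSemiring R] (n : ℕ) (x y : R) :
    (ascPochhammer R n).eval (x + y) = ∑ ij ∈ antidiagonal n,
      (n.choose ij.1 : R) * ((ascPochhammer R ij.1).eval x * (ascPochhammer R ij.2).eval y) := by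
  induction n with
  | zero => simp
  | succ n ih =>
    rw [sum_antidiagonal_choose_succ_mul fun i j =>
      (ascPochhammer R i).eval x * (ascPochhammer R j).eval y, ascPochhammer_succ_eval, ih, sum_mul,
      ← sum_add_distrib]
    refine sum_congr rfl fun ij hij => ?_
    rw [HasAntidiagonal.mem_antidiagonal] at hij
    rw [← Nat.choose_symm_of_eq_add hij.symm, ascPochhammer_succ_eval, ascPochhammer_succ_eval,
      ← hij]
    push_cast
    ring

theorem taylor_ascPochhammer {R : Type*} [CommSemiring R] (r : R) (n : ℕ) :
    taylor r (ascPochhammer R n) = ∑ ij ∈ antidiagonal n,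
      C ((n.choose ij.1 : R) * (ascPochhammer R ij.2).eval r) * ascPochhammer R ij.1 := by
  -- Vandermonde in the ring `R[X]`, at `x = X` and `y = C r`.
  have eval_ascPochhammer (m : ℕ) (q : R[X]) :
      (ascPochhammer R[X] m).eval q = (ascPochhammer R m).comp q := by
    rw [← ascPochhammer_map C, eval_map, comp]
  rw [taylor_apply, ← eval_ascPochhammer, ascPochhammer_eval_add]
  refine sum_congr rfl fun ij _ => ?_
  rw [eval_ascPochhammer, comp_X, ← ascPochhammer_map C, eval_map, eval₂_hom, C_mul,
    C_eq_natCast]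
  ring

theorem iterate_deriv_eval {𝕜 : Type*} [NontriviallyNormedField 𝕜] (p : 𝕜[X]) (k : ℕ) :
    deriv^[k] (fun x => p.eval x) = fun x => (derivative^[k] p).eval x := by
  induction k generalizing p with
  | zero => rfl
  | succ k ih =>
    rw [Function.iterate_succ_apply, _root_.funext fun x => Polynomial.deriv p (x := x), ih,
      Function.iterate_succ_apply]

theorem taylor_coeff_eq_iterate_deriv {𝕜 : Type*} [NontriviallyNormedField 𝕜] [CharZero 𝕜]
    (p : 𝕜[X]) (r : 𝕜) (k : ℕ) :
    (taylor r p).coeff k = (k.factorial : 𝕜)⁻¹ * deriv^[k] (fun x => p.eval x) r := by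
  rw [iterate_deriv_eval, ← factorial_smul_hasseDeriv, taylor_coeff]
  dsimp only
  rw [LinearMap.smul_apply, eval_smul, nsmul_eq_mul,
    inv_mul_cancel_left₀ (Nat.cast_ne_zero.mpr k.factorial_ne_zero)]

end Polynomial

theorem rStirling_first_as_binomial_sum (r : ℝ) (n k : ℕ) :
    S1r r n k =
      ∑ j ∈ Finset.Icc k n,
        (n.choose j : ℝ) * (stirling1 j k : ℝ) * (ascPochhammer ℝ (n - j)).eval r := by
  have taylor_expansion : S1r r n k = ∑ j ∈ range (n + 1),
      (n.choose j : ℝ) * (Nat.stirlingFirst j k : ℝ) * (ascPochhammer ℝ (n - j)).eval r := by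
    rw [S1r, one_div, ← taylor_coeff_eq_iterate_deriv, taylor_ascPochhammer, finsetSum_coeff,
      Nat.sum_antidiagonal_eq_sum_range_succ_mk]
    refine sum_congr rfl fun j _ => ?_
    rw [coeff_C_mul, ascPochhammer_coeff]
    ring
  rw [taylor_expansion, stirling1_eq_stirlingFirst]
  refine (sum_subset (fun j hj => ?_) fun j hj hjk => ?_).symm
  · simp only [mem_Icc, mem_range] at hj ⊢
    omega
  · simp only [mem_Icc, mem_range, not_and, not_le] at hj hjk
    rw [Nat.stirlingFirst_eq_zero_of_lt (by omega), Nat.cast_zero, mul_zero, zero_mul]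
end

section
/- Counting incomplete permutations: for integers n ≥ 1 and r ≥ 0, the number of permutations of {1,…,n+r} in which the r elements n+1,…,n+r all lie in distinct cycles equals (1+r)^{n↑} = (r+1)(r+2)⋯(r+n). -/
/-!
Cutting the element `0` out of its cycle turns a permutation `σ` of `Fin (m + 1)` into a
permutation `e` of `Fin m` (`Equiv.Perm.decomposeFin σ = (σ 0, e)`) whose cycles on the
remaining points are those of `σ`. So whether the distinguished points lie in distinct cycles
depends only on `e`, each `e` extends in `m + 1` ways, and peeling off the `n`
non-distinguished points of `Fin (n + r)` one at a time gives `(r + n) ⋯ (r + 1)`.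
-/

namespace Equiv.Perm

variable {α β : Type*}

theorem SameCycle.map {σ : Perm α} {τ : Perm β} {f : α → β}
    (h : ∀ x, τ.SameCycle (f x) (f (σ x))) {x y : α} (hxy : σ.SameCycle x y) :
    τ.SameCycle (f x) (f y) := by
  obtain ⟨k, rfl⟩ := hxy
  induction k using Int.induction_on with
  | zero => exact SameCycle.refl _ _
  | succ k ih =>
    rw [add_comm, zpow_add, zpow_one, mul_apply]
    exact ih.trans (h _)
  | pred k ih =>
    rw [sub_eq_neg_add, zpow_add, zpow_neg_one, mul_apply]
    exact ih.trans (by simpa using (h (σ⁻¹ ((σ ^ (-(k : ℤ))) x))).symm)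

theorem sameCycle_permCongr (e : α ≃ β) (σ : Perm α) {x y : α} :
    (e.permCongr σ).SameCycle (e x) (e y) ↔ σ.SameCycle x y := by
  refine exists_congr fun k => ?_
  rw [← permCongrHom_coe, ← map_zpow, permCongrHom_coe, permCongr_apply, symm_apply_apply,
    e.apply_eq_iff_eq]

theorem sameCycle_decomposeOption_symm_some_iff [DecidableEq α] (a : Option α) (e : Perm α)
    {i j : α} :
    (decomposeOption.symm (a, e)).SameCycle (some i) (some j) ↔ e.SameCycle i j := by
  set σ := decomposeOption.symm (a, e)
  have hnone : σ none = a := by simp [σ]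
  have hsome : ∀ y, σ (some y) = swap none a (some (e y)) := by simp [σ]
  constructor
  · intro h
    -- `none` is sent to the point of `α` preceding `a` in its `e`-cycle.
    let g : Option α → α := fun u => u.getD (a.elim i e.symm)
    refine h.map (f := g) fun u => ?_
    rcases u with _ | y
    · rcases a with _ | a
      · simp [hnone, g, SameCycle.refl]
      · simpa [hnone, g] using (SameCycle.refl e (e.symm a)).apply_right
    · by_cases hy : a = some (e y)
      · simp [hsome, hy, g, SameCycle.refl]
      · rw [hsome, swap_apply_of_ne_of_ne (Option.some_ne_none _) (Ne.symm hy)]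
        exact (SameCycle.refl e y).apply_right
  · refine SameCycle.map fun y => ?_
    by_cases hy : a = some (e y)
    · have : σ (σ (some y)) = some (e y) := by simp [hsome, hy, hnone]
      exact this ▸ (SameCycle.refl σ _).apply_right.apply_right
    · have : σ (some y) = some (e y) := by
        rw [hsome, swap_apply_of_ne_of_ne (Option.some_ne_none _) (Ne.symm hy)]
      exact this ▸ (SameCycle.refl σ _).apply_right

theorem sameCycle_decomposeFin_symm_succ_iff {n : ℕ} (p : Fin (n + 1)) (e : Perm (Fin n))
    {i j : Fin n} :
    (decomposeFin.symm (p, e)).SameCycle i.succ j.succ ↔ e.SameCycle i j := by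
  rw [← sameCycle_decomposeOption_symm_some_iff (finSuccEquiv n p),
    ← sameCycle_permCongr (finSuccEquiv n).symm]
  rfl

theorem pairwise_not_sameCycle_decomposeFin_symm_image_succ_iff {n : ℕ} (p : Fin (n + 1))
    (e : Perm (Fin n)) (s : Set (Fin n)) :
    (Fin.succ '' s).Pairwise (fun i j => ¬ (decomposeFin.symm (p, e)).SameCycle i j) ↔
      s.Pairwise (fun i j => ¬ e.SameCycle i j) := by
  rw [(Fin.succ_injective n).injOn.pairwise_image]
  unfold Function.onFun
  simp only [sameCycle_decomposeFin_symm_succ_iff]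

theorem card_pairwise_not_sameCycle_image_succ {n : ℕ} (s : Set (Fin n)) :
    Nat.card {σ : Perm (Fin (n + 1)) // (Fin.succ '' s).Pairwise (fun i j => ¬ σ.SameCycle i j)} =
      (n + 1) * Nat.card {e : Perm (Fin n) // s.Pairwise (fun i j => ¬ e.SameCycle i j)} := by
  have hdecomp (σ : Perm (Fin (n + 1))) :
      (Fin.succ '' s).Pairwise (fun i j => ¬ σ.SameCycle i j) ↔
        s.Pairwise (fun i j => ¬ (decomposeFin σ).2.SameCycle i j) := by
    rw [← pairwise_not_sameCycle_decomposeFin_symm_image_succ_iff (decomposeFin σ).1,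
      Prod.mk.eta, symm_apply_apply]
  rw [Nat.card_congr ((decomposeFin.subtypeEquiv hdecomp).trans
      ((subtypeProdEquivSigmaSubtype fun _ e => s.Pairwise (fun i j => ¬ e.SameCycle i j)).trans
        (sigmaEquivProd _ _))),
    Nat.card_prod, Nat.card_eq_fintype_card, Fintype.card_fin]

theorem pairwise_not_sameCycle_iff {σ : Perm α} :
    Pairwise (fun i j => ¬ σ.SameCycle i j) ↔ σ = 1 := by
  refine ⟨fun h => ext fun x => by_contra fun hx => h hx (SameCycle.refl σ x).apply_left, ?_⟩
  rintro rfl i j hij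
  exact hij ∘ sameCycle_one.1

end Equiv.Perm

open Equiv Equiv.Perm in
theorem count_perms_distinguished_in_distinct_cycles_general (n r : ℕ) :
    Nat.card {σ : Equiv.Perm (Fin (n + r)) //
        ∀ i j : Fin (n + r), n ≤ (i : ℕ) → n ≤ (j : ℕ) → i ≠ j → ¬ σ.SameCycle i j} =
      (ascPochhammer ℕ n).eval (r + 1) := by
  have pairwise_iff (m : ℕ) (σ : Perm (Fin (m + r))) :
      (∀ i j : Fin (m + r), m ≤ (i : ℕ) → m ≤ (j : ℕ) → i ≠ j → ¬ σ.SameCycle i j) ↔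
        {i : Fin (m + r) | m ≤ i}.Pairwise (fun i j => ¬ σ.SameCycle i j) :=
    ⟨fun h _ hi _ hj => h _ _ hi hj, fun h _ _ hi hj => h hi hj⟩
  rw [Nat.card_congr (subtypeEquivRight (pairwise_iff n))]
  induction n with
  | zero => simp [Set.pairwise_univ, pairwise_not_sameCycle_iff]
  | succ n ih =>
    have hs : {i : Fin (n + r + 1) | n + 1 ≤ i} = Fin.succ '' {i : Fin (n + r) | n ≤ i} := by
      ext i
      cases i using Fin.cases <;> simp
    rw [Nat.add_right_comm, hs, card_pairwise_not_sameCycle_image_succ, ih,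
      ascPochhammer_succ_eval]
    push_cast
    ring

theorem count_perms_distinguished_in_distinct_cycles (n r : ℕ) (hn : 1 ≤ n) :
    Nat.card {σ : Equiv.Perm (Fin (n + r)) //
        ∀ i j : Fin (n + r), n ≤ (i : ℕ) → n ≤ (j : ℕ) → i ≠ j → ¬ σ.SameCycle i j} =
      (ascPochhammer ℕ n).eval (r + 1) :=
  count_perms_distinguished_in_distinct_cycles_general n r
end

section
/- Counting partitions with r distinguished elements in distinct blocks: for n ≥ 1 and integer r ≥ 0, the number of set partitions of {1,…,n+r} in which the elements n+1,…,n+r lie in pairwise distinct blocks equals the r-Bell number B_{n,r} = Σ_{j=0}^n C(n,j) B_{n−j} r^j, where B_m is the m-th Bell number. -/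
open Polynomial Finset

/-- The `m`-th Bell number: the number of set partitions of an `m`-element set. -/
noncomputable def bell (m : ℕ) : ℕ :=
  Nat.card (Finpartition (Finset.univ : Finset (Fin m)))

/-!
A partition of `α ⊕ κ` in which the points of `κ` lie in distinct blocks is the same as a
choice, for every `a : α`, of the point of `κ` whose block it joins, if any (a map
`f : α → Option κ`), together with an arbitrary partition of the remaining points
`{a | f a = none}`. Grouping the maps `f` by the set of `j` points they send into `κ` gives
`∑ j, C(n, j) r ^ j B_{n - j}`.
-/

namespace Finpartition
variable {α : Type*} [DecidableEq α] {s : Finset α}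

theorem ext_part {P Q : Finpartition s} (h : ∀ a, P.part a = Q.part a) : P = Q := by
  ext t
  constructor <;> intro ht
  · obtain ⟨a, ha, rfl⟩ := P.part_surjOn ht
    exact h a ▸ Q.part_mem.2 ha
  · obtain ⟨a, ha, rfl⟩ := Q.part_surjOn ht
    exact (h a).symm ▸ P.part_mem.2 ha

variable [Fintype α]

open Classical in
noncomputable def equivSetoid : Finpartition (univ : Finset α) ≃ Setoid α where
  toFun P := Setoid.ker P.part
  invFun s := ofSetoid s
  left_inv P := ext_part fun a => by
    ext b
    rw [mem_part_ofSetoid_iff_rel, Setoid.ker_def, eq_comm,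
      P.mem_part_iff_part_eq_part (mem_univ b) (mem_univ a)]
  right_inv s := Setoid.ext fun a b => by
    rw [Setoid.ker_def, eq_comm,
      ← (ofSetoid s).mem_part_iff_part_eq_part (mem_univ b) (mem_univ a),
      mem_part_ofSetoid_iff_rel]

theorem equivSetoid_rel_iff (P : Finpartition (univ : Finset α)) (a b : α) :
    equivSetoid P a b ↔ ∃ t ∈ P.parts, b ∈ t ∧ a ∈ t := by
  rw [equivSetoid, Equiv.coe_fn_mk, Setoid.ker_def, eq_comm,
    ← P.mem_part_iff_part_eq_part (mem_univ b) (mem_univ a), mem_part_iff_exists]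

theorem forall_parts_iff_forall_equivSetoid (P : Finpartition (univ : Finset α))
    (p : α → Prop) :
    (∀ b ∈ P.parts, ∀ i j, p i → p j → i ∈ b → j ∈ b → i = j) ↔
      ∀ i j, p i → p j → equivSetoid P i j → i = j := by
  simp only [equivSetoid_rel_iff]
  exact ⟨fun h i j hi hj ⟨b, hb, hjb, hib⟩ => h b hb i j hi hj hib hjb,
    fun h b hb i j hi hj hib hjb => h i j hi hj ⟨b, hb, hjb, hib⟩⟩

end Finpartition

def Equiv.setoidCongr {α β : Type*} (e : α ≃ β) : Setoid α ≃ Setoid β where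
  toFun s := s.comap e.symm
  invFun s := s.comap e
  left_inv s := Setoid.ext fun a b => by simp [Setoid.comap_rel]
  right_inv s := Setoid.ext fun a b => by simp [Setoid.comap_rel]

theorem Equiv.setoidCongr_rel_iff {α β : Type*} (e : α ≃ β) (s : Setoid α) (x y : β) :
    e.setoidCongr s x y ↔ s (e.symm x) (e.symm y) :=
  Iff.rfl

instance {α : Type*} [Finite α] : Finite (Setoid α) := by
  classical
  have := Fintype.ofFinite α
  exact Finite.of_equiv _ Finpartition.equivSetoid

theorem card_setoid_eq_bell (α : Type*) [Fintype α] :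
    Nat.card (Setoid α) = bell (Fintype.card α) := by
  rw [bell, Nat.card_congr Finpartition.equivSetoid]
  exact Nat.card_congr ((Fintype.equivFin α).setoidCongr)

namespace Setoid
variable {α κ : Type*}

def SeparatesInr (s : Setoid (α ⊕ κ)) : Prop :=
  ∀ ⦃k l : κ⦄, s (.inr k) (.inr l) → k = l

open Classical in
noncomputable def anchor (s : Setoid (α ⊕ κ)) (a : α) : Option κ :=
  if h : ∃ k, s (.inl a) (.inr k) then some h.choose else none

theorem anchor_eq_some_iff {s : Setoid (α ⊕ κ)} (hs : s.SeparatesInr) {a : α} {k : κ} :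
    s.anchor a = some k ↔ s (.inl a) (.inr k) := by
  unfold anchor
  split_ifs with h
  · refine ⟨?_, fun hk => congrArg some (hs (s.trans (s.symm h.choose_spec) hk))⟩
    rintro ⟨⟩
    exact h.choose_spec
  · simpa using fun hk => h ⟨k, hk⟩

/-- `inl a` joins the class of `inr k` when `f a = some k`; the points with `f a = none` are
partitioned by `q`. -/
def glueLabel (f : α → Option κ) (q : Setoid {a // f a = none}) (a : α) : Quotient q ⊕ κ :=
  match h : f a with
  | none => .inl ⟦⟨a, h⟩⟧
  | some k => .inr k

theorem glueLabel_of_eq_none {f : α → Option κ} (q : Setoid {a // f a = none}) {a : α}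
    (h : f a = none) : glueLabel f q a = .inl ⟦⟨a, h⟩⟧ := by
  unfold glueLabel
  split <;> simp_all

theorem glueLabel_of_eq_some {f : α → Option κ} (q : Setoid {a // f a = none}) {a : α} {k : κ}
    (h : f a = some k) : glueLabel f q a = .inr k := by
  unfold glueLabel
  split <;> simp_all

def glue (f : α → Option κ) (q : Setoid {a // f a = none}) : Setoid (α ⊕ κ) :=
  ker (Sum.elim (glueLabel f q) .inr)

variable {f : α → Option κ} {q : Setoid {a // f a = none}}

theorem glue_inr_inr {k l : κ} : glue f q (.inr k) (.inr l) ↔ k = l := by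
  rw [glue, ker_def, Sum.elim_inr, Sum.elim_inr, Sum.inr.injEq]

theorem separatesInr_glue : (glue f q).SeparatesInr := fun _ _ => glue_inr_inr.1

theorem glue_inl_inr {a : α} {k : κ} : glue f q (.inl a) (.inr k) ↔ f a = some k := by
  rw [glue, ker_def, Sum.elim_inl, Sum.elim_inr]
  cases h : f a with
  | none => simp [glueLabel_of_eq_none q h]
  | some l => simp [glueLabel_of_eq_some q h]

theorem glue_inl_inl {a b : α} (ha : f a = none) (hb : f b = none) :
    glue f q (.inl a) (.inl b) ↔ q ⟨a, ha⟩ ⟨b, hb⟩ := by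
  rw [glue, ker_def, Sum.elim_inl, Sum.elim_inl, glueLabel_of_eq_none q ha,
    glueLabel_of_eq_none q hb, Sum.inl.injEq, Quotient.eq]

namespace SeparatesInr
variable {s t : Setoid (α ⊕ κ)}

theorem rel_inr_iff (hs : s.SeparatesInr) (ht : t.SeparatesInr)
    (h_inr : ∀ a k, s (.inl a) (.inr k) ↔ t (.inl a) (.inr k)) (k : κ) (y : α ⊕ κ) :
    s (.inr k) y ↔ t (.inr k) y := by
  cases y with
  | inl b => rw [s.comm', t.comm', h_inr]
  | inr l => exact ⟨fun h => hs h ▸ t.refl' _, fun h => ht h ▸ s.refl' _⟩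

theorem ext (hs : s.SeparatesInr) (ht : t.SeparatesInr)
    (h_inr : ∀ a k, s (.inl a) (.inr k) ↔ t (.inl a) (.inr k))
    (h_inl : ∀ a b, (∀ k, ¬ s (.inl a) (.inr k)) → (∀ k, ¬ s (.inl b) (.inr k)) →
      (s (.inl a) (.inl b) ↔ t (.inl a) (.inl b))) : s = t := by
  have h_right := rel_inr_iff hs ht h_inr
  refine Setoid.ext fun x y => ?_
  rcases x with a | k
  swap
  · exact h_right k y
  by_cases ha : ∃ k, s (.inl a) (.inr k)
  · obtain ⟨k, hk⟩ := ha
    have hk' := (h_inr a k).1 hk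
    exact ⟨fun h => t.trans' hk' ((h_right k y).1 (s.trans' (s.symm' hk) h)),
      fun h => s.trans' hk ((h_right k y).2 (t.trans' (t.symm' hk') h))⟩
  simp only [not_exists] at ha
  rcases y with b | l
  swap
  · exact h_inr a l
  by_cases hb : ∃ l, s (.inl b) (.inr l)
  · obtain ⟨l, hl⟩ := hb
    have hl' := (h_inr b l).1 hl
    exact ⟨fun h => (ha l (s.trans' h hl)).elim,
      fun h => (ha l ((h_inr a l).2 (t.trans' h hl'))).elim⟩
  simp only [not_exists] at hb
  exact h_inl a b ha hb

end SeparatesInr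

theorem glue_anchor {s : Setoid (α ⊕ κ)} (hs : s.SeparatesInr) :
    glue s.anchor (s.comap fun a : {a // s.anchor a = none} => .inl a.1) = s := by
  refine SeparatesInr.ext separatesInr_glue hs
    (fun a k => by rw [glue_inl_inr, anchor_eq_some_iff hs]) fun a b ha hb => ?_
  have hna : s.anchor a = none := Option.eq_none_iff_forall_ne_some.2 fun k hk =>
    ha k (glue_inl_inr.2 hk)
  have hnb : s.anchor b = none := Option.eq_none_iff_forall_ne_some.2 fun k hk =>
    hb k (glue_inl_inr.2 hk)
  rw [glue_inl_inl hna hnb, comap_rel]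

theorem glue_injective :
    Function.Injective fun p : Σ f : α → Option κ, Setoid {a // f a = none} =>
      glue p.1 p.2 := by
  rintro ⟨f, q⟩ ⟨f', q'⟩ h
  dsimp only at h
  obtain rfl : f = f' := funext fun a => Option.ext fun k => by
    rw [← glue_inl_inr (q := q), ← glue_inl_inr (q := q'), h]
  congr
  ext ⟨a, ha⟩ ⟨b, hb⟩
  rw [← glue_inl_inl ha hb, ← glue_inl_inl ha hb, h]

noncomputable def separatesInrEquiv :
    (Σ f : α → Option κ, Setoid {a // f a = none}) ≃
      {s : Setoid (α ⊕ κ) // s.SeparatesInr} :=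
  Equiv.ofBijective (fun p => ⟨glue p.1 p.2, separatesInr_glue⟩)
    ⟨fun _ _ h => glue_injective (congrArg Subtype.val h),
      fun s => ⟨⟨_, _⟩, Subtype.ext (glue_anchor s.2)⟩⟩

end Setoid

section FunOption
variable {α κ : Type*} [Fintype α] [DecidableEq α] [Fintype κ]

theorem card_filter_isSome_eq (S : Finset α) :
    #{f : α → Option κ | ({a | (f a).isSome} : Finset α) = S} = Fintype.card κ ^ #S := by
  have hfilter : ({f : α → Option κ | ({a | (f a).isSome} : Finset α) = S} : Finset _) =
      Fintype.piFinset fun a => if a ∈ S then (univ : Finset κ).map .some else {none} := by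
    ext f
    simp only [mem_filter, mem_univ, true_and, Finset.ext_iff, Fintype.mem_piFinset]
    refine forall_congr' fun a => ?_
    split_ifs with ha <;> cases f a <;> simp [ha]
  rw [hfilter, Fintype.card_piFinset,
    Fintype.prod_congr _ (fun a => if a ∈ S then Fintype.card κ else 1)
      (fun a => by split_ifs <;> simp),
    Fintype.prod_ite_mem, prod_const]

theorem sum_fun_option_apply_card_none {M : Type*} [AddCommMonoid M] (g : ℕ → M) :
    ∑ f : α → Option κ, g #{a | f a = none} =
      ∑ j ∈ range (Fintype.card α + 1),
        ((Fintype.card α).choose j * Fintype.card κ ^ j) • g (Fintype.card α - j) := by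
  rw [← sum_fiberwise univ (fun f : α → Option κ => ({a | (f a).isSome} : Finset α))]
  have hfiber (S : Finset α) :
      ∑ f : α → Option κ with ({a | (f a).isSome} : Finset α) = S, g #{a | f a = none} =
        Fintype.card κ ^ #S • g (Fintype.card α - #S) := by
    rw [← card_filter_isSome_eq S, ← sum_const]
    refine sum_congr rfl fun f hf => ?_
    rw [mem_filter] at hf
    have : ({a | f a = none} : Finset α) = Sᶜ := by
      rw [← hf.2]
      ext a
      simp
    rw [this, card_compl]
  simp only [hfiber]
  rw [← powerset_univ,
    sum_powerset_apply_card fun m => Fintype.card κ ^ m • g (Fintype.card α - m), card_univ]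
  simp only [mul_smul]

end FunOption

theorem separatesInr_setoidCongr_iff {n r : ℕ} (s : Setoid (Fin (n + r))) :
    (finSumFinEquiv.symm.setoidCongr s).SeparatesInr ↔
      ∀ i j : Fin (n + r), n ≤ (i : ℕ) → n ≤ (j : ℕ) → s i j → i = j := by
  have hrel (k l : Fin r) :
      finSumFinEquiv.symm.setoidCongr s (.inr k) (.inr l) ↔
        s (Fin.natAdd n k) (Fin.natAdd n l) := by
    rw [Equiv.setoidCongr_rel_iff, Equiv.symm_symm, finSumFinEquiv_apply_right,
      finSumFinEquiv_apply_right]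
  refine ⟨fun h i j hi hj hij => ?_, fun h k l hkl =>
    (Fin.natAdd_inj n).1 (h _ _ (by simp) (by simp) ((hrel k l).1 hkl))⟩
  induction i using Fin.addCases with
  | left a => exact absurd hi (by simp)
  | right k =>
    induction j using Fin.addCases with
    | left b => exact absurd hj (by simp)
    | right l => exact congrArg _ (h ((hrel k l).2 hij))

theorem count_partitions_distinguished_in_distinct_blocks_general (n r : ℕ) :
    Nat.card {P : Finpartition (Finset.univ : Finset (Fin (n + r))) //
        ∀ b ∈ P.parts, ∀ i j : Fin (n + r),
          n ≤ (i : ℕ) → n ≤ (j : ℕ) → i ∈ b → j ∈ b → i = j} =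
      ∑ j ∈ Finset.range (n + 1), n.choose j * bell (n - j) * r ^ j := by
  calc _ = Nat.card {s : Setoid (Fin n ⊕ Fin r) // s.SeparatesInr} :=
        Nat.card_congr <|
          (Finpartition.equivSetoid.trans finSumFinEquiv.symm.setoidCongr).subtypeEquiv fun P =>
            (P.forall_parts_iff_forall_equivSetoid _).trans (separatesInr_setoidCongr_iff _).symm
    _ = ∑ f : Fin n → Option (Fin r), bell #{a | f a = none} := by
        rw [← Nat.card_congr Setoid.separatesInrEquiv, Nat.card_sigma]
        simp only [card_setoid_eq_bell, Fintype.card_subtype]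
    _ = _ := by
        rw [sum_fun_option_apply_card_none, Fintype.card_fin, Fintype.card_fin]
        exact sum_congr rfl fun j _ => by rw [smul_eq_mul]; ring

theorem count_partitions_distinguished_in_distinct_blocks (n r : ℕ) (hn : 1 ≤ n) :
    Nat.card {P : Finpartition (Finset.univ : Finset (Fin (n + r))) //
        ∀ b ∈ P.parts, ∀ i j : Fin (n + r),
          n ≤ (i : ℕ) → n ≤ (j : ℕ) → i ∈ b → j ∈ b → i = j} =
      ∑ j ∈ Finset.range (n + 1), n.choose j * bell (n - j) * r ^ j :=
  count_partitions_distinguished_in_distinct_blocks_general n r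
end

section
/- The r-Dobiński formula: for all real θ > 0 and r ≥ 0 and all n ∈ ℕ, Σ_{m=0}^∞ (r+m)^n θ^m / m! = e^θ · T_{n,r}(θ), where T_{n,r}(θ) = Σ_{k=0}^n S2_r(n,k) θ^k is the r-Touchard polynomial. -/
/-!
Newton's forward-difference formula expands `(r + m) ^ n` in the falling factorials `m↓k`, with
coefficients `S2r r n k` that vanish for `k > n`. Since `m↓k` also vanishes for `m < k`,
`∑ₘ m↓k θ^m / m! = θ^k ∑ₘ θ^m / m! = θ^k e^θ`, and summing term by term gives the formula.
-/

open Polynomial Finset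

/-- The forward finite difference operator `(Δ f)(r) = f (r+1) - f r`. -/
def fdiff (f : ℝ → ℝ) : ℝ → ℝ := fun r => f (r + 1) - f r

/-- The `r`-Stirling number of the second kind, `(1/k!) Δ^k (r^n)`. -/
noncomputable def S2r (r : ℝ) (n k : ℕ) : ℝ :=
  (1 / (k.factorial : ℝ)) * (fdiff^[k] (fun x : ℝ => x ^ n)) r

open Nat

lemma fdiff_eq_fwdDiff : fdiff = fwdDiff (1 : ℝ) := rfl

lemma S2r_eq_zero_of_lt {n k : ℕ} (h : n < k) (r : ℝ) : S2r r n k = 0 := by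
  simp [S2r, fdiff_eq_fwdDiff, fwdDiff_iter_pow_eq_zero_of_lt h]

lemma choose_mul_fdiff_iter_pow (r : ℝ) (n m k : ℕ) :
    (m.choose k : ℝ) * fdiff^[k] (fun x : ℝ => x ^ n) r = S2r r n k * m.descFactorial k := by
  rw [S2r, descFactorial_eq_factorial_mul_choose, cast_mul]
  field_simp

lemma add_natCast_pow_eq_sum_S2r_mul_descFactorial (r : ℝ) (n m : ℕ) :
    (r + m) ^ n = ∑ k ∈ range (n + 1), S2r r n k * m.descFactorial k := by
  have newton := shift_eq_sum_fwdDiff_iter (1 : ℝ) (fun x : ℝ => x ^ n) m r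
  simp only [nsmul_eq_mul, mul_one, ← fdiff_eq_fwdDiff, choose_mul_fdiff_iter_pow] at newton
  rw [newton, ← eventually_constant_sum (N := m + 1) (n := m + n + 1) ?_ (by omega),
    eventually_constant_sum (N := n + 1) ?_ (by omega)]
  · intro k hk
    rw [S2r_eq_zero_of_lt hk, zero_mul]
  · intro k hk
    rw [descFactorial_eq_zero_iff_lt.mpr hk, cast_zero, mul_zero]

lemma hasSum_descFactorial_mul_pow_div_factorial (θ : ℝ) (k : ℕ) :
    HasSum (fun m : ℕ => m.descFactorial k * θ ^ m / m !) (θ ^ k * Real.exp θ) := by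
  have hexp : HasSum (fun m : ℕ => θ ^ m / m !) (Real.exp θ) := by
    rw [Real.exp_eq_exp_ℝ]
    exact NormedSpace.expSeries_div_hasSum_exp θ
  have hshift : HasSum (fun m : ℕ => (m + k).descFactorial k * θ ^ (m + k) / (m + k) !)
      (θ ^ k * Real.exp θ) := by
    refine (hexp.mul_left (θ ^ k)).congr_fun fun m => ?_
    have hfact : (m ! : ℝ) * (m + k).descFactorial k = (m + k) ! := by
      exact_mod_cast (Nat.add_sub_cancel m k) ▸ factorial_mul_descFactorial (Nat.le_add_left k m)
    rw [← hfact, pow_add]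
    field_simp
  refine ((add_left_injective k).hasSum_iff fun m hm => ?_).mp hshift
  have hmk : m < k := by
    by_contra! h
    exact hm ⟨m - k, Nat.sub_add_cancel h⟩
  rw [descFactorial_eq_zero_iff_lt.mpr hmk, cast_zero, zero_mul, zero_div]

lemma hasSum_add_natCast_pow_mul_pow_div_factorial (θ r : ℝ) (n : ℕ) :
    HasSum (fun m : ℕ => (r + m) ^ n * θ ^ m / m !)
      (Real.exp θ * ∑ k ∈ range (n + 1), S2r r n k * θ ^ k) := by
  have hterm (k : ℕ) : HasSum (fun m : ℕ => S2r r n k * (m.descFactorial k * θ ^ m / m !))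
      (S2r r n k * (θ ^ k * Real.exp θ)) :=
    (hasSum_descFactorial_mul_pow_div_factorial θ k).mul_left _
  convert hasSum_sum fun k (_ : k ∈ range (n + 1)) => hterm k using 1
  · ext m
    simp only [add_natCast_pow_eq_sum_S2r_mul_descFactorial r n m, sum_mul, sum_div, mul_div_assoc,
      mul_assoc]
  · rw [mul_sum]
    exact sum_congr rfl fun k _ => by ring

theorem r_dobinski_formula_general (θ r : ℝ) (n : ℕ) :
    ∑' m : ℕ, (r + m) ^ n * θ ^ m / (m.factorial : ℝ) =
      Real.exp θ * ∑ k ∈ Finset.range (n + 1), S2r r n k * θ ^ k :=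
  (hasSum_add_natCast_pow_mul_pow_div_factorial θ r n).tsum_eq

theorem r_dobinski_formula (θ r : ℝ) (hθ : 0 < θ) (hr : 0 ≤ r) (n : ℕ) (hn : 1 ≤ n) :
    ∑' m : ℕ, (r + m) ^ n * θ ^ m / (m.factorial : ℝ) =
      Real.exp θ * ∑ k ∈ Finset.range (n + 1), S2r r n k * θ ^ k :=
  r_dobinski_formula_general θ r n
end
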